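/- arXiv:1102.4825 — 2 statements merged into one kernel-verified Lean document; each statement's English description precedes it below -/
import Mathlib

section
/- Let T ∈ F_q^{(s−1)×s} with s ≥ 2 and suppose T ∼ (I | u) where u ∈ F_q^{s−1} is a column vector all of whose entries are nonzero. Then there exist an invertible (s−1) × (s−1) matrix Q and a column vector u' ∈ F_q^{s−1} with all entries nonzero such that T = Q (I | u') (with no column permutation). -/
open Matrix

/-- The permutation matrix of a permutation `σ` of `Fin s`. -/
def permMat {F : Type*} [Field F] {s : ℕ} (σ : Equiv.Perm (Fin s)) :
    Matrix (Fin s) (Fin s) F :=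
  fun i j => if σ i = j then 1 else 0

/-- `T ∼ T'` iff `T = Q T' Π` for some invertible `Q` and permutation matrix `Π`. -/
def MatRel {F : Type*} [Field F] {l s : ℕ} (T T' : Matrix (Fin l) (Fin s) F) : Prop :=
  ∃ Q : Matrix (Fin l) (Fin l) F, IsUnit Q ∧
    ∃ σ : Equiv.Perm (Fin s), T = Q * T' * permMat σ

/-- The `(s-1) × s` matrix `(I | u)` whose first `s-1` columns form the identity and whose
last column is `u`. -/
def Iu {F : Type*} [Field F] {s : ℕ} (u : Fin (s - 1) → F) :
    Matrix (Fin (s - 1)) (Fin s) F :=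
  fun i j => if (j : ℕ) < s - 1 then (if (i : ℕ) = (j : ℕ) then 1 else 0) else u i

/-! Having all maximal minors nonzero is preserved by left multiplication with an invertible
matrix and by permuting columns, and `(I | u)` has it exactly when no entry of `u` vanishes.
Hence so does `T`: its first `s - 1` columns form an invertible `P`, `T = P (I | P⁻¹ t)` with `t`
the last column of `T`, and `(I | P⁻¹ t) = P⁻¹ T` again has all maximal minors nonzero. -/

section

variable {F : Type*} [Field F]

/-- For a generator matrix of a linear code this is the MDS property. -/
def IsMDS {m n : Type*} [Fintype m] [DecidableEq m] (M : Matrix m n F) : Prop :=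
  ∀ f : m → n, Function.Injective f → IsUnit (M.submatrix id f)

theorem mul_permMat_eq_submatrix {m : Type*} {s : ℕ} (M : Matrix m (Fin s) F)
    (σ : Equiv.Perm (Fin s)) :
    M * permMat σ = M.submatrix id σ.symm := by
  ext i j
  -- `M * permMat σ` elaborates through the `CStarMatrix` default `HMul` instance.
  change (M * (permMat σ : Matrix (Fin s) (Fin s) F)) i j = _
  simp [permMat, mul_apply, ← Equiv.eq_symm_apply]

section IsMDS

variable {m n : Type*} [Fintype m] [DecidableEq m]

theorem isMDS_unit_mul_iff {Q : Matrix m m F} (hQ : IsUnit Q) {M : Matrix m n F} :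
    IsMDS (Q * M) ↔ IsMDS M :=
  forall₂_congr fun _ _ => hQ.mul_left_iff

theorem IsMDS.mul_permMat {s : ℕ} {M : Matrix m (Fin s) F} (hM : IsMDS M)
    (σ : Equiv.Perm (Fin s)) : IsMDS (M * permMat σ) := by
  intro f hf
  rw [mul_permMat_eq_submatrix, submatrix_submatrix]
  exact hM _ (σ.symm.injective.comp hf)

end IsMDS

section Iu

variable {s : ℕ}

def lastCol (hs : 0 < s) : Fin s := ⟨s - 1, Nat.sub_one_lt_of_lt hs⟩

theorem castLE_or_eq_lastCol (hs : 0 < s) (k : Fin s) :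
    (∃ j : Fin (s - 1), Fin.castLE (Nat.sub_le s 1) j = k) ∨ k = lastCol hs := by
  by_cases hk : (k : ℕ) < s - 1
  · exact .inl ⟨⟨k, hk⟩, rfl⟩
  · exact .inr (Fin.ext (by simp [lastCol]; omega))

theorem castLE_ne_lastCol (hs : 0 < s) (j : Fin (s - 1)) :
    Fin.castLE (Nat.sub_le s 1) j ≠ lastCol hs :=
  fun h => (Fin.ext_iff.1 h ▸ j.2).false

theorem Iu_apply_castLE (u : Fin (s - 1) → F) (i j : Fin (s - 1)) :
    Iu u i (Fin.castLE (Nat.sub_le s 1) j) = (1 : Matrix (Fin (s - 1)) (Fin (s - 1)) F) i j := by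
  simp [Iu, one_apply, Fin.ext_iff]

theorem Iu_apply_lastCol (hs : 0 < s) (u : Fin (s - 1) → F) (i : Fin (s - 1)) :
    Iu u i (lastCol hs) = u i := by
  simp [Iu, lastCol]

theorem Iu_mulVec_apply (hs : 0 < s) (u : Fin (s - 1) → F) (w : Fin s → F) (i : Fin (s - 1)) :
    (Iu u *ᵥ w) i = w (Fin.castLE (Nat.sub_le s 1) i) + u i * w (lastCol hs) := by
  have hIu : ∀ k, Iu u i k =
      (Pi.single (Fin.castLE (Nat.sub_le s 1) i) 1 : Fin s → F) k +
        (Pi.single (lastCol hs) (u i) : Fin s → F) k := by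
    intro k
    rcases castLE_or_eq_lastCol hs k with ⟨j, rfl⟩ | rfl
    · simp [Iu_apply_castLE, one_apply, Pi.single_apply, (castLE_ne_lastCol hs j).symm, eq_comm]
    · simp [Iu_apply_lastCol, (castLE_ne_lastCol hs i).symm]
  simp [mulVec, dotProduct, hIu, add_mul, Finset.sum_add_distrib, Pi.single_apply]

-- The kernel of `(I | u)` is spanned by `(-u, 1)`, which has no zero entry.
theorem eq_zero_of_Iu_mulVec_eq_zero (hs : 0 < s) {u : Fin (s - 1) → F} (hu : ∀ i, u i ≠ 0)
    {w : Fin s → F} (hw : Iu u *ᵥ w = 0) {k : Fin s} (hk : w k = 0) : w = 0 := by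
  have hrow : ∀ i, w (Fin.castLE (Nat.sub_le s 1) i) + u i * w (lastCol hs) = 0 := fun i => by
    rw [← Iu_mulVec_apply hs, hw, Pi.zero_apply]
  have hlast : w (lastCol hs) = 0 := by
    rcases castLE_or_eq_lastCol hs k with ⟨j, rfl⟩ | rfl
    · simpa [hk, hu j] using hrow j
    · exact hk
  funext k'
  rcases castLE_or_eq_lastCol hs k' with ⟨j, rfl⟩ | rfl
  · simpa [hlast] using hrow j
  · exact hlast

theorem isMDS_Iu (hs : 0 < s) {u : Fin (s - 1) → F} (hu : ∀ i, u i ≠ 0) : IsMDS (Iu u) := by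
  intro f hf
  rw [isUnit_iff_isUnit_det, isUnit_iff_ne_zero, Ne, ← exists_mulVec_eq_zero_iff]
  rintro ⟨v, hv0, hv⟩
  obtain ⟨k, hk⟩ : ∃ k, k ∉ Set.range f := by
    by_contra! hsurj
    have := Fintype.card_le_of_surjective f hsurj
    simp only [Fintype.card_fin] at this
    omega
  have hw : Iu u *ᵥ Function.extend f v 0 = 0 := by
    rw [← hv]
    funext i
    exact (Fintype.sum_of_injective f hf _ _
      (fun k hk => by simp [Function.extend_apply' _ _ _ hk])
      (fun j => by simp [hf.extend_apply])).symm
  apply hv0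
  funext j
  rw [← hf.extend_apply v 0 j,
    eq_zero_of_Iu_mulVec_eq_zero hs hu hw (Function.extend_apply' _ _ _ hk)]
  rfl

theorem IsMDS.Iu_apply_ne_zero (hs : 0 < s) {u : Fin (s - 1) → F} (h : IsMDS (Iu u))
    (i : Fin (s - 1)) : u i ≠ 0 := by
  intro hi
  let f := Equiv.swap (Fin.castLE (Nat.sub_le s 1) i) (lastCol hs) ∘ Fin.castLE (Nat.sub_le s 1)
  have hrow : ∀ j, (Iu u).submatrix id f i j = 0 := by
    intro j
    by_cases hj : j = i
    · simp [f, hj, Iu_apply_lastCol, hi]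
    · simp only [submatrix_apply, id, f, Function.comp_apply]
      rw [Equiv.swap_apply_of_ne_of_ne
        (by simpa [Fin.ext_iff] using hj) (castLE_ne_lastCol hs j), Iu_apply_castLE,
        one_apply_ne (Ne.symm hj)]
  have := h f ((Equiv.injective _).comp (Fin.castLE_injective _))
  rw [isUnit_iff_isUnit_det, det_eq_zero_of_row_eq_zero i hrow] at this
  exact not_isUnit_zero this

theorem isMDS_Iu_iff (hs : 0 < s) {u : Fin (s - 1) → F} : IsMDS (Iu u) ↔ ∀ i, u i ≠ 0 :=
  ⟨IsMDS.Iu_apply_ne_zero hs, isMDS_Iu hs⟩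

theorem eq_mul_Iu (hs : 0 < s) (T : Matrix (Fin (s - 1)) (Fin s) F)
    (hP : IsUnit (T.submatrix id (Fin.castLE (Nat.sub_le s 1)))) :
    T = T.submatrix id (Fin.castLE (Nat.sub_le s 1)) *
      Iu ((T.submatrix id (Fin.castLE (Nat.sub_le s 1)))⁻¹ *ᵥ fun i => T i (lastCol hs)) := by
  set P := T.submatrix id (Fin.castLE (Nat.sub_le s 1))
  ext i k
  rcases castLE_or_eq_lastCol hs k with ⟨j, rfl⟩ | rfl
  · simp [mul_apply, Iu_apply_castLE, one_apply, P]
  · simp_rw [mul_apply, Iu_apply_lastCol]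
    change _ = (P *ᵥ (P⁻¹ *ᵥ _)) i
    rw [mulVec_mulVec, mul_nonsing_inv _ ((isUnit_iff_isUnit_det P).1 hP), one_mulVec]

end Iu

end

theorem stmt_3_general (F : Type*) [Field F] {s : ℕ} (hs : 2 ≤ s)
    (T : Matrix (Fin (s - 1)) (Fin s) F) (u : Fin (s - 1) → F) (hu : ∀ i, u i ≠ 0)
    (h : MatRel T (Iu u)) :
    ∃ Q : Matrix (Fin (s - 1)) (Fin (s - 1)) F, IsUnit Q ∧
      ∃ u' : Fin (s - 1) → F, (∀ i, u' i ≠ 0) ∧ T = Q * Iu u' := by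
  have hs₀ : 0 < s := by omega
  obtain ⟨Q, hQ, σ, rfl⟩ := h
  have hT : IsMDS (Q * Iu u * permMat σ) :=
    ((isMDS_unit_mul_iff hQ).2 (isMDS_Iu hs₀ hu)).mul_permMat σ
  have hP := hT _ (Fin.castLE_injective (Nat.sub_le s 1))
  refine ⟨_, hP, _, ?_, eq_mul_Iu hs₀ _ hP⟩
  rw [← isMDS_Iu_iff hs₀, ← isMDS_unit_mul_iff hP, ← eq_mul_Iu hs₀ _ hP]
  exact hT

theorem stmt_3 (F : Type*) [Field F] [Fintype F] {s : ℕ} (hs : 2 ≤ s)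
    (T : Matrix (Fin (s - 1)) (Fin s) F) (u : Fin (s - 1) → F) (hu : ∀ i, u i ≠ 0)
    (h : MatRel T (Iu u)) :
    ∃ Q : Matrix (Fin (s - 1)) (Fin (s - 1)) F, IsUnit Q ∧
      ∃ u' : Fin (s - 1) → F, (∀ i, u' i ≠ 0) ∧ T = Q * Iu u' :=
  stmt_3_general F hs T u hu h
end

section
/- Let M be an s × (s−1) matrix over a field such that for every i, the (s−1) × (s−1) submatrix M_{(i)} obtained by deleting the i-th row is invertible. Then every entry of the row vector (last row of M) · M_{(s)}⁻¹ ∈ F^{1×(s−1)} is nonzero. -/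
/-! If `r j = 0`, the identity `M_last = r ᵥ* M_{(last)}` is a linear dependence among the rows
of `M` in which row `j` does not occur, i.e. a nonzero vector in the left kernel of `M_{(j)}`,
contradicting the invertibility of `M_{(j)}`. -/

open Matrix

theorem vecMul_eq_vecMul_submatrix_succAbove {R m : Type*} [NonUnitalNonAssocSemiring R]
    {n : ℕ} (M : Matrix (Fin (n + 1)) m R) {v : Fin (n + 1) → R} {i : Fin (n + 1)}
    (hv : v i = 0) : v ᵥ* M = (v ∘ i.succAbove) ᵥ* M.submatrix i.succAbove id := by
  ext c
  simp [vecMul, dotProduct, Fin.sum_univ_succAbove _ i, hv]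

theorem vecMul_snoc {R m : Type*} [NonUnitalNonAssocSemiring R] {n : ℕ}
    (M : Matrix (Fin (n + 1)) m R) (v : Fin n → R) (a : R) :
    (Fin.snoc v a : Fin (n + 1) → R) ᵥ* M =
      v ᵥ* M.submatrix Fin.castSucc id + a • M (Fin.last n) := by
  ext c
  simp [vecMul, dotProduct, Fin.sum_univ_castSucc]

theorem eq_zero_of_vecMul_eq_zero_of_isUnit_submatrix_succAbove {R : Type*} [CommRing R]
    {n : ℕ} {M : Matrix (Fin (n + 1)) (Fin n) R} {v : Fin (n + 1) → R} {i : Fin (n + 1)}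
    (hM : IsUnit (M.submatrix i.succAbove id)) (hvM : v ᵥ* M = 0) (hv : v i = 0) : v = 0 := by
  have hrest : v ∘ i.succAbove = 0 := vecMul_injective_of_isUnit hM <| by
    simp only [← vecMul_eq_vecMul_submatrix_succAbove M hv, hvM, zero_vecMul]
  ext k
  obtain rfl | ⟨k, rfl⟩ := Fin.eq_self_or_eq_succAbove i k
  · exact hv
  · exact congrFun hrest k

theorem stmt_14_general (F : Type*) [Field F] {n : ℕ}
    (M : Matrix (Fin (n + 1)) (Fin n) F)
    (hM : ∀ i : Fin (n + 1), IsUnit (M.submatrix i.succAbove id)) :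
    ∀ j : Fin n,
      Matrix.vecMul (M (Fin.last n)) (M.submatrix (Fin.last n).succAbove id)⁻¹ j ≠ 0 := by
  intro j hj
  set A := M.submatrix (Fin.last n).succAbove id
  set r := M (Fin.last n) ᵥ* A⁻¹
  have hrA : r ᵥ* A = M (Fin.last n) := by
    rw [vecMul_vecMul, nonsing_inv_mul A ((isUnit_iff_isUnit_det A).mp (hM _)), vecMul_one]
  set w : Fin (n + 1) → F := Fin.snoc (-r) 1
  have hwM : w ᵥ* M = 0 := by
    rw [vecMul_snoc, neg_vecMul, ← Fin.succAbove_last, hrA, one_smul, neg_add_cancel]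
  have hw : w = 0 := eq_zero_of_vecMul_eq_zero_of_isUnit_submatrix_succAbove (hM j.castSucc) hwM
    (by simp [w, hj])
  simpa [w] using congrFun hw (Fin.last n)

theorem stmt_14 (F : Type*) [Field F] {n : ℕ} (hn : 1 ≤ n)
    (M : Matrix (Fin (n + 1)) (Fin n) F)
    (hM : ∀ i : Fin (n + 1), IsUnit (M.submatrix i.succAbove id)) :
    ∀ j : Fin n,
      Matrix.vecMul (M (Fin.last n)) (M.submatrix (Fin.last n).succAbove id)⁻¹ j ≠ 0 :=
  stmt_14_general F M hM
end
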